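/- arXiv:2210.09253 — 3 statements merged into one kernel-verified Lean document; each statement's English description precedes it below -/
import Mathlib

section
/- Let (Ω, F̃) be a measurable space, let F̃₀, F̃₁, F̃₂ ⊆ F̃ be sub-σ-algebras, and let P̃₀ and P̃₁ be two probability measures on (Ω, F̃) such that P̃₁ is absolutely continuous with respect to P̃₀. Assume that under P̃₀, the σ-algebras F̃₁ and F̃₂ are conditionally independent given F̃₀. Suppose further that a version ρ of the Radon–Nikodym derivative of the restriction of P̃₁ to F̃₀ ∨ F̃₁ ∨ F̃₂ with respect to the restriction of P̃₀ to F̃₀ ∨ F̃₁ ∨ F̃₂ satisfies ρ = ρ₁·ρ₂ P̃₀-almost surely, where for i = 1, 2, ρᵢ is a nonnegative (F̃ᵢ ∨ F̃₀)-measurable random variable. Then under P̃₁, the σ-algebras F̃₁ and F̃₂ are also conditionally independent given F̃₀. -/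
open MeasureTheory ProbabilityTheory
open scoped ENNReal

open Set
open scoped NNReal
set_option linter.unusedSectionVars false

section Aux

variable {Ω : Type*} (F₀ F₁ F₂ : MeasurableSpace Ω) [mΩ : MeasurableSpace Ω] [StandardBorelSpace Ω]
  [Nonempty Ω] (P₀ : Measure Ω) [IsProbabilityMeasure P₀]

/-- set-lintegral of the conditional expectation kernel of a set. -/
lemma aux_kernel_setLIntegral (h₀ : F₀ ≤ mΩ) {A : Set Ω} (hA : MeasurableSet A) {s : Set Ω}
    (hs : MeasurableSet[F₀] s) :
    ∫⁻ ω in s, condExpKernel P₀ F₀ ω A ∂P₀ = P₀ (s ∩ A) := by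
  simp_rw [condExpKernel_apply_eq_condDistrib]
  have hX : @Measurable Ω Ω mΩ (F₀ ⊓ mΩ) id := measurable_id'' inf_le_right
  have := setLIntegral_condDistrib_of_measurableSet (mβ := F₀ ⊓ mΩ)
    (μ := P₀) (X := id) (Y := id) hX aemeasurable_id hA
    (t := s) (by rwa [MeasurableSpace.comap_id, inf_of_le_left h₀])
  simpa using this

/-- Measurability of the kernel conditional expectation of an `ℝ≥0∞` function. -/
lemma aux_E_meas (h₀ : F₀ ≤ mΩ) {f : Ω → ℝ≥0∞} (hf : Measurable f) :
    Measurable[F₀] fun ω => ∫⁻ y, f y ∂(condExpKernel P₀ F₀ ω) := by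
  exact Measurable.lintegral_kernel (κ := condExpKernel P₀ F₀) hf

/-- Conversion of set-lintegrals between the trimmed measure and the original one. -/
lemma aux_trim_setLIntegral (h₀ : F₀ ≤ mΩ) {g : Ω → ℝ≥0∞} (hg : Measurable[F₀] g) {s : Set Ω}
    (hs : MeasurableSet[F₀] s) :
    ∫⁻ ω in s, g ω ∂(P₀.trim h₀) = ∫⁻ ω in s, g ω ∂P₀ := by
  rw [← lintegral_indicator hs, ← lintegral_indicator (h₀ _ hs),
    lintegral_trim h₀ (hg.indicator hs)]

/-- The conditional expectation kernel is a.e. proper over `F₀`-sets (trim-a.e. version). -/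
lemma aux_proper (h₀ : F₀ ≤ mΩ) {S : Set Ω} (hS : MeasurableSet S) {C : Set Ω}
    (hC : MeasurableSet[F₀] C) :
    (fun ω => condExpKernel P₀ F₀ ω (S ∩ C)) =ᵐ[P₀.trim h₀]
      fun ω => C.indicator (fun _ => (1 : ℝ≥0∞)) ω * condExpKernel P₀ F₀ ω S := by
  have hmeas1 : Measurable[F₀] fun ω => condExpKernel P₀ F₀ ω (S ∩ C) :=
    measurable_condExpKernel (hS.inter (h₀ _ hC))
  have hmeas2 : Measurable[F₀] fun ω =>
      C.indicator (fun _ => (1 : ℝ≥0∞)) ω * condExpKernel P₀ F₀ ω S :=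
    (measurable_const.indicator hC).mul (measurable_condExpKernel hS)
  refine ae_eq_of_forall_setLIntegral_eq_of_sigmaFinite (μ := P₀.trim h₀) hmeas1 hmeas2 ?_
  intro s hs _
  rw [aux_trim_setLIntegral F₀ P₀ h₀ hmeas1 hs, aux_trim_setLIntegral F₀ P₀ h₀ hmeas2 hs,
    aux_kernel_setLIntegral F₀ P₀ h₀ (hS.inter (h₀ _ hC)) hs]
  have : ∀ ω, C.indicator (fun _ => (1 : ℝ≥0∞)) ω * condExpKernel P₀ F₀ ω S
      = C.indicator (fun ω => condExpKernel P₀ F₀ ω S) ω := by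
    intro ω
    by_cases hω : ω ∈ C <;> simp [hω]
  simp_rw [this]
  rw [lintegral_indicator (h₀ _ hC), Measure.restrict_restrict (h₀ _ hC),
    aux_kernel_setLIntegral F₀ P₀ h₀ hS (hC.inter hs)]
  congr 1
  ext ω
  simp only [Set.mem_inter_iff]
  tauto

/-- Upgrade conditional independence to the σ-algebras joined with `F₀`. -/
lemma aux_indep_sup (h₀ : F₀ ≤ mΩ) (h₁ : F₁ ≤ mΩ) (h₂ : F₂ ≤ mΩ)
    (hCI : CondIndep F₀ F₁ F₂ h₀ P₀) {A B : Set Ω}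
    (hA : MeasurableSet[F₁ ⊔ F₀] A) (hB : MeasurableSet[F₂ ⊔ F₀] B) :
    (fun ω => condExpKernel P₀ F₀ ω (A ∩ B)) =ᵐ[P₀]
      fun ω => condExpKernel P₀ F₀ ω A * condExpKernel P₀ F₀ ω B := by
  set κ := condExpKernel P₀ F₀ with hκ
  have main : ProbabilityTheory.Kernel.Indep (F₁ ⊔ F₀) (F₂ ⊔ F₀) κ (P₀.trim h₀) := by
    have hgen : ∀ (G : MeasurableSpace Ω),
        G ⊔ F₀ = MeasurableSpace.generateFrom
          (Set.image2 (· ∩ ·) {s | MeasurableSet[G] s} {s | MeasurableSet[F₀] s}) := by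
      intro G
      apply le_antisymm
      · refine sup_le ?_ ?_
        · intro u hu
          exact MeasurableSpace.measurableSet_generateFrom
            ⟨u, hu, Set.univ, MeasurableSet.univ, Set.inter_univ u⟩
        · intro u hu
          exact MeasurableSpace.measurableSet_generateFrom
            ⟨Set.univ, MeasurableSet.univ, u, hu, Set.univ_inter u⟩
      · refine MeasurableSpace.generateFrom_le ?_
        rintro u ⟨v, hv, w, hw, rfl⟩
        exact ((le_sup_left : G ≤ G ⊔ F₀) _ hv).inter ((le_sup_right : F₀ ≤ G ⊔ F₀) _ hw)
    have hpi : ∀ (G : MeasurableSpace Ω),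
        IsPiSystem (Set.image2 (· ∩ ·) {s | MeasurableSet[G] s} {s | MeasurableSet[F₀] s}) := by
      rintro G _ ⟨v, hv, w, hw, rfl⟩ _ ⟨v', hv', w', hw', rfl⟩ -
      exact ⟨v ∩ v', hv.inter hv', w ∩ w', hw.inter hw', by ext ω; simp; tauto⟩
    refine ProbabilityTheory.Kernel.IndepSets.indep (sup_le h₁ h₀) (sup_le h₂ h₀)
      (hpi F₁) (hpi F₂) (hgen F₁) (hgen F₂) ?_
    rintro _ _ ⟨v, hv, w, hw, rfl⟩ ⟨v', hv', w', hw', rfl⟩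
    have e1 := hCI v v' hv hv'
    have e2 := aux_proper F₀ P₀ h₀ ((h₁ _ hv).inter (h₂ _ hv')) (hw.inter hw')
    have e3 := aux_proper F₀ P₀ h₀ (h₁ _ hv) hw
    have e4 := aux_proper F₀ P₀ h₀ (h₂ _ hv') hw'
    filter_upwards [e1, e2, e3, e4] with ω e1 e2 e3 e4
    have hset : (v ∩ w) ∩ (v' ∩ w') = (v ∩ v') ∩ (w ∩ w') := by ext; simp; tauto
    rw [hset, e2, e1, e3, e4]
    by_cases h1 : ω ∈ w <;> by_cases h2 : ω ∈ w' <;>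
      simp [Set.indicator_apply, h1, h2, Set.mem_inter_iff] <;> ring
  have := main A B hA hB
  have h' : (fun ω => κ ω (A ∩ B)) =ᵐ[P₀.trim h₀]
      fun ω => κ ω A * κ ω B := this
  exact ae_eq_of_ae_eq_trim h'

lemma aux_prodB (h₀ : F₀ ≤ mΩ) (h₁ : F₁ ≤ mΩ) (h₂ : F₂ ≤ mΩ)
    (hCI : CondIndep F₀ F₁ F₂ h₀ P₀) {B : Set Ω} (hB : MeasurableSet[F₂ ⊔ F₀] B)
    {s : Set Ω} (hs : MeasurableSet[F₀] s) {f : Ω → ℝ≥0∞} (hf : Measurable[F₁ ⊔ F₀] f) :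
    ∫⁻ ω in s, (∫⁻ y, f y ∂(condExpKernel P₀ F₀ ω)) * condExpKernel P₀ F₀ ω B ∂P₀
      = ∫⁻ ω in s, f ω * B.indicator (fun _ => (1 : ℝ≥0∞)) ω ∂P₀ := by
  have hBm : MeasurableSet B := sup_le h₂ h₀ _ hB
  have hk : ∀ {S : Set Ω}, MeasurableSet S → Measurable fun ω => condExpKernel P₀ F₀ ω S :=
    fun hS => (measurable_condExpKernel hS).mono h₀ le_rfl
  have hE : ∀ {u : Ω → ℝ≥0∞}, Measurable u →
      Measurable fun ω => ∫⁻ y, u y ∂(condExpKernel P₀ F₀ ω) :=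
    fun hu => (aux_E_meas F₀ P₀ h₀ hu).mono h₀ le_rfl
  have hBi : Measurable (B.indicator fun _ => (1 : ℝ≥0∞)) := measurable_const.indicator hBm
  refine @Measurable.ennreal_induction Ω (F₁ ⊔ F₀)
    (fun f => ∫⁻ ω in s, (∫⁻ y, f y ∂(condExpKernel P₀ F₀ ω)) * condExpKernel P₀ F₀ ω B ∂P₀
      = ∫⁻ ω in s, f ω * B.indicator (fun _ => (1 : ℝ≥0∞)) ω ∂P₀) ?_ ?_ ?_ f hf
  · intro c A hA
    have hAm : MeasurableSet A := sup_le h₁ h₀ _ hA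
    have hindep := aux_indep_sup F₀ F₁ F₂ P₀ h₀ h₁ h₂ hCI hA hB
    simp_rw [lintegral_indicator_const hAm, mul_assoc]
    rw [lintegral_const_mul c ((hk hAm).fun_mul (hk hBm))]
    rw [lintegral_congr_ae (ae_restrict_of_ae hindep.symm),
      aux_kernel_setLIntegral F₀ P₀ h₀ (hAm.inter hBm) hs]
    have hpt : ∀ ω, A.indicator (fun _ => c) ω * B.indicator (fun _ => (1 : ℝ≥0∞)) ω
        = (A ∩ B).indicator (fun _ => c) ω := by
      intro ω
      by_cases h1 : ω ∈ A <;> by_cases h2 : ω ∈ B <;>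
        simp [Set.indicator_apply, h1, h2, Set.mem_inter_iff]
    simp_rw [hpt]
    rw [lintegral_indicator_const (hAm.inter hBm), Measure.restrict_apply (hAm.inter hBm),
      Set.inter_comm s (A ∩ B)]
  · intro u v _ hum hvm hPu hPv
    have hua : Measurable u := hum.mono (sup_le h₁ h₀) le_rfl
    have hva : Measurable v := hvm.mono (sup_le h₁ h₀) le_rfl
    simp_rw [Pi.add_apply, lintegral_add_left hua, add_mul]
    rw [lintegral_add_left ((hE hua).fun_mul (hk hBm)), lintegral_add_left (hua.fun_mul hBi),
      hPu, hPv]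
  · intro u hum hmono hPu
    have hua : ∀ n, Measurable (u n) := fun n => (hum n).mono (sup_le h₁ h₀) le_rfl
    simp_rw [lintegral_iSup hua hmono, ENNReal.iSup_mul]
    rw [lintegral_iSup (fun n => (hE (hua n)).fun_mul (hk hBm))
      (fun i j hij ω => mul_le_mul_left (lintegral_mono fun y => hmono hij y) _),
      lintegral_iSup (fun n => (hua n).fun_mul hBi)
      (fun i j hij ω => mul_le_mul_left (hmono hij ω) _)]
    exact iSup_congr hPu

lemma aux_prod (h₀ : F₀ ≤ mΩ) (h₁ : F₁ ≤ mΩ) (h₂ : F₂ ≤ mΩ)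
    (hCI : CondIndep F₀ F₁ F₂ h₀ P₀) {f g : Ω → ℝ≥0∞}
    (hf : Measurable[F₁ ⊔ F₀] f) (hg : Measurable[F₂ ⊔ F₀] g)
    {s : Set Ω} (hs : MeasurableSet[F₀] s) :
    ∫⁻ ω in s, (∫⁻ y, f y ∂(condExpKernel P₀ F₀ ω)) * (∫⁻ y, g y ∂(condExpKernel P₀ F₀ ω)) ∂P₀
      = ∫⁻ ω in s, f ω * g ω ∂P₀ := by
  have hfa : Measurable f := hf.mono (sup_le h₁ h₀) le_rfl
  have hk : ∀ {S : Set Ω}, MeasurableSet S → Measurable fun ω => condExpKernel P₀ F₀ ω S :=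
    fun hS => (measurable_condExpKernel hS).mono h₀ le_rfl
  have hE : ∀ {u : Ω → ℝ≥0∞}, Measurable u →
      Measurable fun ω => ∫⁻ y, u y ∂(condExpKernel P₀ F₀ ω) :=
    fun hu => (aux_E_meas F₀ P₀ h₀ hu).mono h₀ le_rfl
  refine @Measurable.ennreal_induction Ω (F₂ ⊔ F₀)
    (fun g => ∫⁻ ω in s, (∫⁻ y, f y ∂(condExpKernel P₀ F₀ ω))
        * (∫⁻ y, g y ∂(condExpKernel P₀ F₀ ω)) ∂P₀
      = ∫⁻ ω in s, f ω * g ω ∂P₀) ?_ ?_ ?_ g hg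
  · intro c B hB
    have hBm : MeasurableSet B := sup_le h₂ h₀ _ hB
    simp_rw [lintegral_indicator_const hBm]
    have hpt1 : ∀ x y : ℝ≥0∞, x * (c * y) = c * (x * y) := fun x y => by ring
    simp_rw [hpt1]
    rw [lintegral_const_mul c ((hE hfa).fun_mul (hk hBm)),
      aux_prodB F₀ F₁ F₂ P₀ h₀ h₁ h₂ hCI hB hs hf]
    have hpt2 : ∀ ω, f ω * B.indicator (fun _ => c) ω
        = c * (f ω * B.indicator (fun _ => (1 : ℝ≥0∞)) ω) := by
      intro ω
      by_cases h1 : ω ∈ B <;> simp [Set.indicator_apply, h1] <;> ring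
    simp_rw [hpt2]
    rw [lintegral_const_mul c (hfa.fun_mul (measurable_const.indicator hBm))]
  · intro u v _ hum hvm hPu hPv
    have hua : Measurable u := hum.mono (sup_le h₂ h₀) le_rfl
    have hva : Measurable v := hvm.mono (sup_le h₂ h₀) le_rfl
    simp_rw [Pi.add_apply, lintegral_add_left hua, mul_add]
    rw [lintegral_add_left ((hE hfa).fun_mul (hE hua)), lintegral_add_left (hfa.fun_mul hua),
      hPu, hPv]
  · intro u hum hmono hPu
    have hua : ∀ n, Measurable (u n) := fun n => (hum n).mono (sup_le h₂ h₀) le_rfl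
    simp_rw [lintegral_iSup hua hmono, ENNReal.mul_iSup]
    rw [lintegral_iSup (fun n => (hE hfa).fun_mul (hE (hua n)))
      (fun i j hij ω => mul_le_mul_right (lintegral_mono fun y => hmono hij y) _),
      lintegral_iSup (fun n => hfa.fun_mul (hua n))
      (fun i j hij ω => mul_le_mul_right (hmono hij ω) _)]
    exact iSup_congr hPu

lemma aux_withDensity_setIntegral {α : Type*} [M : MeasurableSpace α] (μ : Measure α)
    {T : α → ℝ≥0∞} (hT : Measurable T) (hfin : ∀ᵐ ω ∂μ, T ω < ∞) (u : α → ℝ)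
    {s : Set α} (hs : MeasurableSet s) :
    ∫ ω in s, u ω ∂(μ.withDensity T) = ∫ ω in s, u ω * (T ω).toReal ∂μ := by
  have h1 : μ.withDensity T = μ.withDensity fun ω => (((T ω).toNNReal : ℝ≥0) : ℝ≥0∞) :=
    withDensity_congr_ae (hfin.mono fun ω h => (ENNReal.coe_toNNReal h.ne).symm)
  rw [h1, setIntegral_withDensity_eq_setIntegral_smul₀ (f := fun ω => (T ω).toNNReal)
    ((ENNReal.measurable_toNNReal.comp hT).aemeasurable.restrict) u hs]
  refine setIntegral_congr_fun hs fun ω _ => ?_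
  simp [NNReal.smul_def, mul_comm, ENNReal.toReal]

lemma aux_bayes (h₀ : F₀ ≤ mΩ) (P₁ : Measure Ω) [IsProbabilityMeasure P₁]
    {T : Ω → ℝ≥0∞} (hT : Measurable[F₀] T)
    (hTint : ∀ s, MeasurableSet[F₀] s → ∫⁻ ω in s, T ω ∂P₀ = P₁ s)
    {A : Set Ω} (hA : MeasurableSet A)
    {G : Ω → ℝ≥0∞} (hG : Measurable[F₀] G)
    (hGint : ∀ s, MeasurableSet[F₀] s → ∫⁻ ω in s, G ω ∂P₀ = P₁ (A ∩ s)) :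
    (fun ω => (P₁[A.indicator (fun _ => (1 : ℝ)) | F₀]) ω * (T ω).toReal) =ᵐ[P₀]
      fun ω => (G ω).toReal := by
  have hTν : ∀ s, MeasurableSet[F₀] s → ∫⁻ ω in s, T ω ∂(P₀.trim h₀) = P₁ s := fun s hs => by
    rw [aux_trim_setLIntegral F₀ P₀ h₀ hT hs, hTint s hs]
  have hGν : ∀ s, MeasurableSet[F₀] s → ∫⁻ ω in s, G ω ∂(P₀.trim h₀) = P₁ (A ∩ s) :=
    fun s hs => by rw [aux_trim_setLIntegral F₀ P₀ h₀ hG hs, hGint s hs]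
  have hTfin : ∀ᵐ ω ∂(P₀.trim h₀), T ω < ∞ := by
    refine ae_lt_top hT ?_
    have := hTν Set.univ MeasurableSet.univ
    rw [Measure.restrict_univ] at this
    rw [this]
    exact measure_ne_top P₁ _
  have hGfin : ∀ᵐ ω ∂(P₀.trim h₀), G ω < ∞ := by
    refine ae_lt_top hG ?_
    have := hGν Set.univ MeasurableSet.univ
    rw [Measure.restrict_univ] at this
    rw [this]
    exact measure_ne_top P₁ _
  have hν_eq : P₁.trim h₀ = (P₀.trim h₀).withDensity T := by
    refine @Measure.ext Ω F₀ _ _ fun s hs => ?_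
    rw [trim_measurableSet_eq h₀ hs, withDensity_apply _ hs, hTν s hs]
  have hT' : Measurable[F₀] fun ω => (T ω).toNNReal := ENNReal.measurable_toNNReal.comp hT
  have hTT' : T =ᵐ[P₀.trim h₀] fun ω => (((T ω).toNNReal : ℝ≥0) : ℝ≥0∞) :=
    hTfin.mono fun ω h => (ENNReal.coe_toNNReal h.ne).symm
  have hν_eq' : P₁.trim h₀ = (P₀.trim h₀).withDensity fun ω => (((T ω).toNNReal : ℝ≥0) : ℝ≥0∞) :=
    hν_eq.trans (withDensity_congr_ae hTT')
  set u := P₁[A.indicator (fun _ => (1 : ℝ)) | F₀] with hu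
  have hu_sm : StronglyMeasurable[F₀] u := stronglyMeasurable_condExp
  have hu_int : Integrable u P₁ := integrable_condExp
  have hu_trim : Integrable u (P₁.trim h₀) := hu_int.trim h₀ hu_sm
  have hφ_int : Integrable (fun ω => u ω * (T ω).toReal) (P₀.trim h₀) := by
    rw [hν_eq] at hu_trim
    exact (integrable_withDensity_iff hT hTfin).mp hu_trim
  have hψ_int : Integrable (fun ω => (G ω).toReal) (P₀.trim h₀) := by
    refine integrable_toReal_of_lintegral_ne_top hG.aemeasurable ?_
    have := hGν Set.univ MeasurableSet.univ
    rw [Measure.restrict_univ] at this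
    rw [this]
    exact measure_ne_top P₁ _
  refine ae_eq_of_ae_eq_trim
    (?_ : (fun ω => u ω * (T ω).toReal) =ᵐ[P₀.trim h₀] fun ω => (G ω).toReal)
  refine Integrable.ae_eq_of_forall_setIntegral_eq _ _ hφ_int hψ_int ?_
  intro s hs _
  have l1 : ∫ ω in s, u ω ∂(P₁.trim h₀) = ∫ ω in s, u ω * (T ω).toReal ∂(P₀.trim h₀) := by
    rw [hν_eq]
    exact @aux_withDensity_setIntegral Ω F₀ (P₀.trim h₀) T hT hTfin u s hs
  have l2 : ∫ ω in s, u ω ∂(P₁.trim h₀) = ∫ ω in s, u ω ∂P₁ := by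
    have h2 := integral_trim (μ := P₁.restrict s) h₀ hu_sm
    rw [← restrict_trim h₀ P₁ hs] at h2
    exact h2.symm
  have l3 : ∫ ω in s, u ω ∂P₁ = (P₁ (A ∩ s)).toReal := by
    rw [hu, setIntegral_condExp h₀ ((integrable_const (1 : ℝ)).indicator hA) hs,
      setIntegral_indicator hA]
    simp [Set.inter_comm, measureReal_def]
  have r1 : ∫ ω in s, (G ω).toReal ∂(P₀.trim h₀) = (P₁ (A ∩ s)).toReal := by
    rw [integral_toReal (hG.aemeasurable.restrict) (ae_restrict_of_ae hGfin), hGν s hs]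
  rw [← l1, l2, l3, r1]

end Aux

/-- If `F₁` and `F₂` are conditionally independent given `F₀` under `P₀`,
`P₁ ≪ P₀`, and a version `ρ` of the Radon–Nikodym derivative of the restriction of `P₁`
to `F₀ ⊔ F₁ ⊔ F₂` with respect to the restriction of `P₀` factorizes `P₀`-a.s. as a product
of a nonnegative `F₁ ⊔ F₀`-measurable variable and a nonnegative `F₂ ⊔ F₀`-measurable
variable, then `F₁` and `F₂` are conditionally independent given `F₀` under `P₁`. -/
theorem stmt_0 {Ω : Type*} [mΩ : MeasurableSpace Ω] [StandardBorelSpace Ω]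
    (P₀ P₁ : Measure Ω) [IsProbabilityMeasure P₀] [IsProbabilityMeasure P₁]
    (F₀ F₁ F₂ : MeasurableSpace Ω)
    (h₀ : F₀ ≤ mΩ) (h₁ : F₁ ≤ mΩ) (h₂ : F₂ ≤ mΩ)
    (hac : P₁ ≪ P₀)
    (hCI : CondIndep F₀ F₁ F₂ h₀ P₀)
    (ρ ρ₁ ρ₂ : Ω → ℝ≥0∞)
    (hρmeas : Measurable[F₀ ⊔ F₁ ⊔ F₂] ρ)
    (hρRN : P₁.trim (show F₀ ⊔ F₁ ⊔ F₂ ≤ mΩ from sup_le (sup_le h₀ h₁) h₂) =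
      (P₀.trim (show F₀ ⊔ F₁ ⊔ F₂ ≤ mΩ from sup_le (sup_le h₀ h₁) h₂)).withDensity ρ)
    (hρ₁ : Measurable[F₁ ⊔ F₀] ρ₁) (hρ₂ : Measurable[F₂ ⊔ F₀] ρ₂)
    (hfact : ρ =ᵐ[P₀] fun ω => ρ₁ ω * ρ₂ ω) :
    CondIndep F₀ F₁ F₂ h₀ P₁ := by
  haveI : Nonempty Ω := Measure.nonempty_of_neZero P₀
  have hm : F₀ ⊔ F₁ ⊔ F₂ ≤ mΩ := sup_le (sup_le h₀ h₁) h₂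
  have h0m : F₀ ≤ F₀ ⊔ F₁ ⊔ F₂ := le_trans le_sup_left le_sup_left
  have h1m : F₁ ≤ F₀ ⊔ F₁ ⊔ F₂ := le_trans le_sup_right le_sup_left
  have h2m : F₂ ≤ F₀ ⊔ F₁ ⊔ F₂ := le_sup_right
  have hρm : Measurable[mΩ] ρ := hρmeas.mono hm le_rfl
  have hρ₁a : Measurable[mΩ] ρ₁ := hρ₁.mono (sup_le h₁ h₀) le_rfl
  have hρ₂a : Measurable[mΩ] ρ₂ := hρ₂.mono (sup_le h₂ h₀) le_rfl
  -- the measure `P₁` evaluated through `ρ`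
  have hP₁ : ∀ A : Set Ω, MeasurableSet[F₀ ⊔ F₁ ⊔ F₂] A → P₁ A = ∫⁻ ω in A, ρ ω ∂P₀ := by
    intro A hA
    have e1 : P₁ A = P₁.trim hm A := (trim_measurableSet_eq hm hA).symm
    have e2 : ∫⁻ ω in A, ρ ω ∂(P₀.trim hm) = ∫⁻ ω in A, ρ ω ∂P₀ := by
      rw [← lintegral_indicator hA, ← lintegral_indicator (hm _ hA),
        lintegral_trim hm (hρmeas.indicator hA)]
    rw [e1, hρRN, withDensity_apply _ hA, e2]
  rw [condIndep_iff (mΩ := mΩ) F₀ F₁ F₂ h₀ h₁ h₂ P₁]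
  intro t1 t2 ht1 ht2
  have ht1' : MeasurableSet[F₁ ⊔ F₀] t1 := (le_sup_left : F₁ ≤ F₁ ⊔ F₀) _ ht1
  have ht2' : MeasurableSet[F₂ ⊔ F₀] t2 := (le_sup_left : F₂ ≤ F₂ ⊔ F₀) _ ht2
  have ht1a : MeasurableSet[mΩ] t1 := h₁ _ ht1
  have ht2a : MeasurableSet[mΩ] t2 := h₂ _ ht2
  -- the four conditional-expectation-like functions
  set a : Ω → ℝ≥0∞ := fun ω => ∫⁻ y, t1.indicator ρ₁ y ∂(condExpKernel (mΩ := mΩ) P₀ F₀ ω) with ha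
  set b : Ω → ℝ≥0∞ := fun ω => ∫⁻ y, t2.indicator ρ₂ y ∂(condExpKernel (mΩ := mΩ) P₀ F₀ ω) with hb
  set c : Ω → ℝ≥0∞ := fun ω => ∫⁻ y, ρ₁ y ∂(condExpKernel (mΩ := mΩ) P₀ F₀ ω) with hc
  set d : Ω → ℝ≥0∞ := fun ω => ∫⁻ y, ρ₂ y ∂(condExpKernel (mΩ := mΩ) P₀ F₀ ω) with hd
  have hameas : Measurable[F₀] a := aux_E_meas (mΩ := mΩ) F₀ P₀ h₀ (hρ₁a.indicator ht1a)
  have hbmeas : Measurable[F₀] b := aux_E_meas (mΩ := mΩ) F₀ P₀ h₀ (hρ₂a.indicator ht2a)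
  have hcmeas : Measurable[F₀] c := aux_E_meas (mΩ := mΩ) F₀ P₀ h₀ hρ₁a
  have hdmeas : Measurable[F₀] d := aux_E_meas (mΩ := mΩ) F₀ P₀ h₀ hρ₂a
  -- generic evaluation of set integrals of indicators of ρ₁ * ρ₂
  have hEval : ∀ A : Set Ω, MeasurableSet[F₀ ⊔ F₁ ⊔ F₂] A → MeasurableSet[mΩ] A →
      ∀ s : Set Ω, MeasurableSet[F₀] s →
      ∫⁻ ω in s, A.indicator (fun ω => ρ₁ ω * ρ₂ ω) ω ∂P₀ = P₁ (A ∩ s) := by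
    intro A hA hAa s hs
    rw [lintegral_indicator hAa, Measure.restrict_restrict hAa,
      lintegral_congr_ae (ae_restrict_of_ae hfact.symm), ← hP₁ (A ∩ s) (hA.inter (h0m _ hs))]
  -- the four set-integral identities
  have hU : ∀ s : Set Ω, MeasurableSet[F₀] s →
      ∫⁻ ω in s, a ω * d ω ∂P₀ = P₁ (t1 ∩ s) := by
    intro s hs
    rw [ha, hd, aux_prod (mΩ := mΩ) F₀ F₁ F₂ P₀ h₀ h₁ h₂ hCI (hρ₁.indicator ht1') hρ₂ hs]
    have hpt : ∀ ω, t1.indicator ρ₁ ω * ρ₂ ω = t1.indicator (fun ω => ρ₁ ω * ρ₂ ω) ω := by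
      intro ω; by_cases hω : ω ∈ t1 <;> simp [hω]
    simp_rw [hpt]
    exact hEval t1 (h1m _ ht1) ht1a s hs
  have hV : ∀ s : Set Ω, MeasurableSet[F₀] s →
      ∫⁻ ω in s, c ω * b ω ∂P₀ = P₁ (t2 ∩ s) := by
    intro s hs
    rw [hc, hb, aux_prod (mΩ := mΩ) F₀ F₁ F₂ P₀ h₀ h₁ h₂ hCI hρ₁ (hρ₂.indicator ht2') hs]
    have hpt : ∀ ω, ρ₁ ω * t2.indicator ρ₂ ω = t2.indicator (fun ω => ρ₁ ω * ρ₂ ω) ω := by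
      intro ω; by_cases hω : ω ∈ t2 <;> simp [hω]
    simp_rw [hpt]
    exact hEval t2 (h2m _ ht2) ht2a s hs
  have hW : ∀ s : Set Ω, MeasurableSet[F₀] s →
      ∫⁻ ω in s, a ω * b ω ∂P₀ = P₁ ((t1 ∩ t2) ∩ s) := by
    intro s hs
    rw [ha, hb, aux_prod (mΩ := mΩ) F₀ F₁ F₂ P₀ h₀ h₁ h₂ hCI (hρ₁.indicator ht1') (hρ₂.indicator ht2') hs]
    have hpt : ∀ ω, t1.indicator ρ₁ ω * t2.indicator ρ₂ ω
        = (t1 ∩ t2).indicator (fun ω => ρ₁ ω * ρ₂ ω) ω := by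
      intro ω
      by_cases h1 : ω ∈ t1 <;> by_cases h2 : ω ∈ t2 <;>
        simp [Set.indicator_apply, h1, h2, Set.mem_inter_iff]
    simp_rw [hpt]
    exact hEval (t1 ∩ t2) ((h1m _ ht1).inter (h2m _ ht2)) (ht1a.inter ht2a) s hs
  have hT : ∀ s : Set Ω, MeasurableSet[F₀] s →
      ∫⁻ ω in s, c ω * d ω ∂P₀ = P₁ s := by
    intro s hs
    rw [hc, hd, aux_prod (mΩ := mΩ) F₀ F₁ F₂ P₀ h₀ h₁ h₂ hCI hρ₁ hρ₂ hs,
      lintegral_congr_ae (ae_restrict_of_ae hfact.symm)]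
    exact (hP₁ s (h0m _ hs)).symm
  -- conditional Bayes identities
  have hTmeas : Measurable[F₀] fun ω => c ω * d ω := hcmeas.mul hdmeas
  have hu := aux_bayes (mΩ := mΩ) F₀ P₀ h₀ P₁ hTmeas hT ht1a (hameas.fun_mul hdmeas) hU
  have hv := aux_bayes (mΩ := mΩ) F₀ P₀ h₀ P₁ hTmeas hT ht2a (hcmeas.fun_mul hbmeas) hV
  have hw := aux_bayes (mΩ := mΩ) F₀ P₀ h₀ P₁ hTmeas hT (ht1a.inter ht2a) (hameas.fun_mul hbmeas) hW
  -- the conditioning density is a.e. finite and a.e. positive under `P₁`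
  have hTfin : ∀ᵐ ω ∂P₀, c ω * d ω ≠ ∞ := by
    have h1 : ∫⁻ ω, c ω * d ω ∂P₀ ≠ ∞ := by
      have h2 := hT Set.univ MeasurableSet.univ
      rw [Measure.restrict_univ] at h2
      rw [h2]
      exact measure_ne_top P₁ _
    exact (ae_lt_top (hTmeas.mono h₀ le_rfl) h1).mono fun ω h => h.ne
  have hTpos : ∀ᵐ ω ∂P₁, c ω * d ω ≠ 0 := by
    have hz : MeasurableSet[F₀] {ω | c ω * d ω = 0} := hTmeas (measurableSet_singleton 0)
    have h1 : P₁ {ω | c ω * d ω = 0} = 0 := by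
      rw [← hT _ hz]
      rw [setLIntegral_congr_fun (h₀ _ hz) (fun ω hω => hω)]
      simp
    rw [ae_iff]
    simpa only [ne_eq, not_not] using h1
  filter_upwards [hu.filter_mono hac.ae_le, hv.filter_mono hac.ae_le,
    hw.filter_mono hac.ae_le, hTfin.filter_mono hac.ae_le, hTpos] with ω e1 e2 e3 e4 e5
  rw [Pi.mul_apply]
  simp only [ENNReal.toReal_mul] at e1 e2 e3
  have htT : (c ω).toReal * (d ω).toReal ≠ 0 := by
    rw [← ENNReal.toReal_mul]
    exact ENNReal.toReal_ne_zero.mpr ⟨e5, e4⟩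
  refine mul_right_cancel₀ (mul_ne_zero htT htT) ?_
  calc (P₁⟦t1 ∩ t2 | F₀⟧) ω * ((c ω).toReal * (d ω).toReal * ((c ω).toReal * (d ω).toReal))
      = ((P₁⟦t1 ∩ t2 | F₀⟧) ω * ((c ω).toReal * (d ω).toReal))
        * ((c ω).toReal * (d ω).toReal) := by ring
    _ = ((a ω).toReal * (b ω).toReal) * ((c ω).toReal * (d ω).toReal) := by rw [e3]
    _ = ((a ω).toReal * (d ω).toReal) * ((c ω).toReal * (b ω).toReal) := by ring
    _ = ((P₁⟦t1 | F₀⟧) ω * ((c ω).toReal * (d ω).toReal))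
        * ((P₁⟦t2 | F₀⟧) ω * ((c ω).toReal * (d ω).toReal)) := by rw [e1, e2]
    _ = (P₁⟦t1 | F₀⟧) ω * (P₁⟦t2 | F₀⟧) ω
        * ((c ω).toReal * (d ω).toReal * ((c ω).toReal * (d ω).toReal)) := by ring
end

section
/- Let 𝒢₁, 𝒢₂, 𝒢₃ be sub-σ-algebras of F on a common complete probability space (Ω, F, P), with respective P-completions 𝒢̄₁, 𝒢̄₂, 𝒢̄₃. Then 𝒢₁ and 𝒢₂ are conditionally independent given 𝒢₃ under P if and only if 𝒢̄₁ and 𝒢̄₂ are conditionally independent given 𝒢̄₃ under P. -/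
open MeasureTheory ProbabilityTheory

/-- The `P`-completion of a sub-σ-algebra `m` of `mΩ`: the σ-algebra of all sets
`A ∈ mΩ` such that `P (A ∆ B) = 0` for some `B ∈ m`. (This collection is already a
σ-algebra when `(Ω, mΩ, P)` is complete; generating from it does not change it.) -/
def MeasureTheory.sigmaCompletion {Ω : Type*} (mΩ : MeasurableSpace Ω)
    (P : Measure Ω) (m : MeasurableSpace Ω) : MeasurableSpace Ω :=
  MeasurableSpace.generateFrom
    {A | MeasurableSet[mΩ] A ∧ ∃ B, MeasurableSet[m] B ∧ P (symmDiff A B) = 0}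

section Aux

variable {Ω : Type*} {m : MeasurableSpace Ω} [mΩ : MeasurableSpace Ω] {P : Measure Ω}

lemma le_sigmaCompletion (hm : m ≤ mΩ) : m ≤ MeasureTheory.sigmaCompletion mΩ P m :=
  fun A hA => MeasurableSpace.measurableSet_generateFrom ⟨hm _ hA, A, hA, by simp⟩

lemma measurableSet_of_sigmaCompletion {A : Set Ω}
    (hA : MeasurableSet[MeasureTheory.sigmaCompletion mΩ P m] A) :
    MeasurableSet[mΩ] A ∧ ∃ B, MeasurableSet[m] B ∧ P (symmDiff A B) = 0 := by
  let m' : MeasurableSpace Ω :=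
    { MeasurableSet' := fun A =>
        MeasurableSet[mΩ] A ∧ ∃ B, MeasurableSet[m] B ∧ P (symmDiff A B) = 0
      measurableSet_empty := ⟨@MeasurableSet.empty Ω mΩ, ∅, @MeasurableSet.empty Ω m, by simp⟩
      measurableSet_compl := by
        rintro A ⟨hAm, B, hB, hPB⟩
        exact ⟨hAm.compl, Bᶜ, hB.compl, by rwa [compl_symmDiff_compl]⟩
      measurableSet_iUnion := by
        intro f hf
        choose B hB hPB using fun n => (hf n).2
        refine ⟨MeasurableSet.iUnion fun n => (hf n).1, ⋃ n, B n,
          MeasurableSet.iUnion hB, ?_⟩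
        refine measure_mono_null ?_ (measure_iUnion_null hPB)
        intro x hx
        rw [Set.mem_symmDiff] at hx
        rcases hx with ⟨hx1, hx2⟩ | ⟨hx1, hx2⟩
        · obtain ⟨n, hn⟩ := Set.mem_iUnion.mp hx1
          exact Set.mem_iUnion.mpr ⟨n, Set.mem_symmDiff.mpr
            (Or.inl ⟨hn, fun h => hx2 (Set.mem_iUnion.mpr ⟨n, h⟩)⟩)⟩
        · obtain ⟨n, hn⟩ := Set.mem_iUnion.mp hx1
          exact Set.mem_iUnion.mpr ⟨n, Set.mem_symmDiff.mpr
            (Or.inr ⟨hn, fun h => hx2 (Set.mem_iUnion.mpr ⟨n, h⟩)⟩)⟩ }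
  have hgen : MeasureTheory.sigmaCompletion mΩ P m ≤ m' :=
    MeasurableSpace.generateFrom_le fun A hA => hA
  exact hgen _ hA

lemma condexp_sigmaCompletion [IsProbabilityMeasure P] (hm : m ≤ mΩ)
    {f : Ω → ℝ} (hf : Integrable f P) :
    P[f | MeasureTheory.sigmaCompletion mΩ P m] =ᵐ[P] P[f | m] := by
  have hle : m ≤ MeasureTheory.sigmaCompletion mΩ P m := le_sigmaCompletion hm
  have hm' : MeasureTheory.sigmaCompletion mΩ P m ≤ mΩ :=
    MeasurableSpace.generateFrom_le fun A hA => hA.1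
  refine (ae_eq_condExp_of_forall_setIntegral_eq hm' hf
    (fun s _ _ => integrable_condExp.integrableOn) (fun s hs _ => ?_)
    ((stronglyMeasurable_condExp.mono hle).aestronglyMeasurable)).symm
  obtain ⟨hsm, B, hB, hPB⟩ := measurableSet_of_sigmaCompletion hs
  have heq : s =ᵐ[P] B := measure_symmDiff_eq_zero_iff.mp hPB
  rw [setIntegral_congr_set heq, setIntegral_condExp hm hf hB,
    ← setIntegral_congr_set heq]

end Aux

/-- On a complete probability space, sub-σ-algebras `𝒢₁` and `𝒢₂` are
conditionally independent given `𝒢₃` under `P` if and only if their `P`-completions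
`𝒢̄₁` and `𝒢̄₂` are conditionally independent given `𝒢̄₃` under `P`. -/
theorem stmt_3 {Ω : Type*} [mΩ : MeasurableSpace Ω] [StandardBorelSpace Ω]
    (P : Measure Ω) [IsProbabilityMeasure P] (hcomp : P.IsComplete)
    (𝒢₁ 𝒢₂ 𝒢₃ : MeasurableSpace Ω)
    (h₁ : 𝒢₁ ≤ mΩ) (h₂ : 𝒢₂ ≤ mΩ) (h₃ : 𝒢₃ ≤ mΩ) :
    CondIndep 𝒢₃ 𝒢₁ 𝒢₂ h₃ P ↔
      CondIndep (MeasureTheory.sigmaCompletion mΩ P 𝒢₃)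
        (MeasureTheory.sigmaCompletion mΩ P 𝒢₁)
        (MeasureTheory.sigmaCompletion mΩ P 𝒢₂)
        (MeasurableSpace.generateFrom_le fun A hA => hA.1) P := by
  letI : MeasurableSpace Ω := mΩ
  have hle₁ := le_sigmaCompletion (P := P) h₁
  have hle₂ := le_sigmaCompletion (P := P) h₂
  have hle₃ := le_sigmaCompletion (P := P) h₃
  have hc₁ : MeasureTheory.sigmaCompletion mΩ P 𝒢₁ ≤ mΩ :=
    MeasurableSpace.generateFrom_le fun A hA => hA.1
  have hc₂ : MeasureTheory.sigmaCompletion mΩ P 𝒢₂ ≤ mΩ :=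
    MeasurableSpace.generateFrom_le fun A hA => hA.1
  have hc₃ : MeasureTheory.sigmaCompletion mΩ P 𝒢₃ ≤ mΩ :=
    MeasurableSpace.generateFrom_le fun A hA => hA.1
  rw [condIndep_iff _ _ _ h₃ h₁ h₂, condIndep_iff _ _ _ hc₃ hc₁ hc₂]
  constructor
  · intro h t1 t2 ht1 ht2
    obtain ⟨ht1m, B1, hB1, hPB1⟩ := measurableSet_of_sigmaCompletion ht1
    obtain ⟨ht2m, B2, hB2, hPB2⟩ := measurableSet_of_sigmaCompletion ht2
    have heq1 : t1 =ᵐ[P] B1 := measure_symmDiff_eq_zero_iff.mp hPB1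
    have heq2 : t2 =ᵐ[P] B2 := measure_symmDiff_eq_zero_iff.mp hPB2
    have heq12 : (t1 ∩ t2 : Set Ω) =ᵐ[P] (B1 ∩ B2 : Set Ω) := heq1.inter heq2
    have hi12 : Integrable ((B1 ∩ B2).indicator (fun _ => (1 : ℝ))) P :=
      (integrable_const 1).indicator ((h₁ _ hB1).inter (h₂ _ hB2))
    have hi1 : Integrable (B1.indicator (fun _ => (1 : ℝ))) P :=
      (integrable_const 1).indicator (h₁ _ hB1)
    have hi2 : Integrable (B2.indicator (fun _ => (1 : ℝ))) P :=
      (integrable_const 1).indicator (h₂ _ hB2)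
    calc (P⟦t1 ∩ t2 | MeasureTheory.sigmaCompletion mΩ P 𝒢₃⟧)
        =ᵐ[P] (P⟦B1 ∩ B2 | MeasureTheory.sigmaCompletion mΩ P 𝒢₃⟧) :=
          condExp_congr_ae (indicator_ae_eq_of_ae_eq_set heq12)
      _ =ᵐ[P] (P⟦B1 ∩ B2 | 𝒢₃⟧) := condexp_sigmaCompletion h₃ hi12
      _ =ᵐ[P] (P⟦B1 | 𝒢₃⟧) * (P⟦B2 | 𝒢₃⟧) := h B1 B2 hB1 hB2
      _ =ᵐ[P] (P⟦t1 | MeasureTheory.sigmaCompletion mΩ P 𝒢₃⟧)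
            * (P⟦t2 | MeasureTheory.sigmaCompletion mΩ P 𝒢₃⟧) := by
          refine Filter.EventuallyEq.mul ?_ ?_
          · exact ((condexp_sigmaCompletion h₃ hi1).symm.trans
              (condExp_congr_ae (indicator_ae_eq_of_ae_eq_set heq1)).symm)
          · exact ((condexp_sigmaCompletion h₃ hi2).symm.trans
              (condExp_congr_ae (indicator_ae_eq_of_ae_eq_set heq2)).symm)
  · intro h t1 t2 ht1 ht2
    have hi12 : Integrable ((t1 ∩ t2).indicator (fun _ => (1 : ℝ))) P :=
      (integrable_const 1).indicator ((h₁ _ ht1).inter (h₂ _ ht2))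
    have hi1 : Integrable (t1.indicator (fun _ => (1 : ℝ))) P :=
      (integrable_const 1).indicator (h₁ _ ht1)
    have hi2 : Integrable (t2.indicator (fun _ => (1 : ℝ))) P :=
      (integrable_const 1).indicator (h₂ _ ht2)
    calc (P⟦t1 ∩ t2 | 𝒢₃⟧)
        =ᵐ[P] (P⟦t1 ∩ t2 | MeasureTheory.sigmaCompletion mΩ P 𝒢₃⟧) :=
          (condexp_sigmaCompletion h₃ hi12).symm
      _ =ᵐ[P] (P⟦t1 | MeasureTheory.sigmaCompletion mΩ P 𝒢₃⟧)
            * (P⟦t2 | MeasureTheory.sigmaCompletion mΩ P 𝒢₃⟧) :=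
          h t1 t2 (hle₁ _ ht1) (hle₂ _ ht2)
      _ =ᵐ[P] (P⟦t1 | 𝒢₃⟧) * (P⟦t2 | 𝒢₃⟧) :=
          (condexp_sigmaCompletion h₃ hi1).mul (condexp_sigmaCompletion h₃ hi2)
end

section
/- Let (Ω, F, P) be a probability space, and for each n ∈ ℕ let 𝒜ₙ, ℬₙ, 𝒞ₙ ⊆ F be sub-σ-algebras such that the families are increasing (𝒜ₙ ⊆ 𝒜ₙ₊₁, ℬₙ ⊆ ℬₙ₊₁, 𝒞ₙ ⊆ 𝒞ₙ₊₁ for all n). Suppose that for every n ∈ ℕ, 𝒜ₙ and ℬₙ are conditionally independent given 𝒞ₙ under P. Then the σ-algebras 𝒜_∞ := ⋁ₙ 𝒜ₙ and ℬ_∞ := ⋁ₙ ℬₙ are conditionally independent given 𝒞_∞ := ⋁ₙ 𝒞ₙ under P. -/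
open MeasureTheory ProbabilityTheory Filter Topology

/-- If `(𝒜ₙ)`, `(ℬₙ)`, `(𝒞ₙ)` are increasing families of sub-σ-algebras
of `mΩ` such that for every `n`, `𝒜ₙ` and `ℬₙ` are conditionally independent given
`𝒞ₙ` under `P`, then `⋁ₙ 𝒜ₙ` and `⋁ₙ ℬₙ` are conditionally independent given
`⋁ₙ 𝒞ₙ` under `P`. -/
theorem stmt_6 {Ω : Type*} [mΩ : MeasurableSpace Ω] [StandardBorelSpace Ω]
    (P : Measure Ω) [IsProbabilityMeasure P]
    (𝒜 ℬ 𝒞 : ℕ → MeasurableSpace Ω)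
    (h𝒜 : ∀ n, 𝒜 n ≤ mΩ) (hℬ : ∀ n, ℬ n ≤ mΩ) (h𝒞 : ∀ n, 𝒞 n ≤ mΩ)
    (h𝒜mono : Monotone 𝒜) (hℬmono : Monotone ℬ) (h𝒞mono : Monotone 𝒞)
    (hCI : ∀ n, CondIndep (𝒞 n) (𝒜 n) (ℬ n) (h𝒞 n) P) :
    CondIndep (⨆ n, 𝒞 n) (⨆ n, 𝒜 n) (⨆ n, ℬ n) (iSup_le h𝒞) P := by
  set ℱ : Filtration ℕ mΩ := ⟨𝒞, h𝒞mono, h𝒞⟩ with hℱ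
  -- π-systems
  set p1 : Set (Set Ω) := ⋃ n, {s | MeasurableSet[𝒜 n] s} with hp1def
  set p2 : Set (Set Ω) := ⋃ n, {s | MeasurableSet[ℬ n] s} with hp2def
  have hgen : ∀ (𝒟 : ℕ → MeasurableSpace Ω), Monotone 𝒟 →
      (⨆ n, 𝒟 n) = MeasurableSpace.generateFrom (⋃ n, {s | MeasurableSet[𝒟 n] s}) := by
    intro 𝒟 _
    refine le_antisymm (iSup_le fun n => ?_) (MeasurableSpace.generateFrom_le ?_)
    · intro s hs
      exact MeasurableSpace.measurableSet_generateFrom (Set.mem_iUnion.2 ⟨n, hs⟩)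
    · rintro s hs
      obtain ⟨n, hn⟩ := Set.mem_iUnion.1 hs
      exact (le_iSup 𝒟 n) s hn
  have hpi : ∀ (𝒟 : ℕ → MeasurableSpace Ω), Monotone 𝒟 →
      IsPiSystem (⋃ n, {s | MeasurableSet[𝒟 n] s}) := by
    intro 𝒟 hmono s hs t ht _
    obtain ⟨m, hm⟩ := Set.mem_iUnion.1 hs
    obtain ⟨k, hk⟩ := Set.mem_iUnion.1 ht
    exact Set.mem_iUnion.2 ⟨max m k,
      ((hmono (le_max_left m k)) s hm).inter ((hmono (le_max_right m k)) t hk)⟩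
  refine CondIndepSets.condIndep (iSup_le h𝒜) (iSup_le hℬ)
    (hpi 𝒜 h𝒜mono) (hpi ℬ hℬmono) (hgen 𝒜 h𝒜mono) (hgen ℬ hℬmono) ?_
  rw [condIndepSets_iff]
  rotate_left
  · rintro s hs
    obtain ⟨n, hn⟩ := Set.mem_iUnion.1 hs
    exact h𝒜 n s hn
  · rintro s hs
    obtain ⟨n, hn⟩ := Set.mem_iUnion.1 hs
    exact hℬ n s hn
  rintro A B hA hB
  obtain ⟨m, hAm⟩ := Set.mem_iUnion.1 hA
  obtain ⟨k, hBk⟩ := Set.mem_iUnion.1 hB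
  have hAmeas : MeasurableSet A := h𝒜 m A hAm
  have hBmeas : MeasurableSet B := hℬ k B hBk
  have hsup : (⨆ n, ℱ n) = ⨆ n, 𝒞 n := rfl
  -- Lévy upward for the three indicator functions
  have h1 := MeasureTheory.tendsto_ae_condExp (ℱ := ℱ) (μ := P)
    ((A ∩ B).indicator (fun _ => (1 : ℝ)))
  have h2 := MeasureTheory.tendsto_ae_condExp (ℱ := ℱ) (μ := P)
    (A.indicator (fun _ => (1 : ℝ)))
  have h3 := MeasureTheory.tendsto_ae_condExp (ℱ := ℱ) (μ := P)
    (B.indicator (fun _ => (1 : ℝ)))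
  -- for each n ≥ max m k, the conditional independence at level n
  have hn : ∀ n, max m k ≤ n →
      (P⟦A ∩ B | 𝒞 n⟧) =ᵐ[P] (P⟦A | 𝒞 n⟧) * (P⟦B | 𝒞 n⟧) := by
    intro n hle
    have hA' : MeasurableSet[𝒜 n] A := h𝒜mono (le_trans (le_max_left m k) hle) A hAm
    have hB' : MeasurableSet[ℬ n] B := hℬmono (le_trans (le_max_right m k) hle) B hBk
    exact ((condIndep_iff (𝒞 n) (𝒜 n) (ℬ n) (h𝒞 n) (h𝒜 n) (hℬ n) P).mp (hCI n)) A B hA' hB'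
  have hn' : ∀ᵐ x ∂P, ∀ n ≥ max m k,
      (P⟦A ∩ B | 𝒞 n⟧) x = (P⟦A | 𝒞 n⟧) x * (P⟦B | 𝒞 n⟧) x := by
    rw [ae_all_iff]
    intro n
    by_cases h : max m k ≤ n
    · filter_upwards [hn n h] with x hx
      intro _
      exact hx
    · filter_upwards with x hx
      exact absurd hx h
  filter_upwards [h1, h2, h3, hn'] with x hx1 hx2 hx3 hxn
  have htprod : Tendsto (fun n => (P⟦A | ℱ n⟧) x * (P⟦B | ℱ n⟧) x) atTop
      (𝓝 ((P⟦A | ⨆ n, ℱ n⟧) x * (P⟦B | ⨆ n, ℱ n⟧) x)) := hx2.mul hx3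
  have htlim : Tendsto (fun n => (P⟦A ∩ B | ℱ n⟧) x) atTop
      (𝓝 ((P⟦A | ⨆ n, ℱ n⟧) x * (P⟦B | ⨆ n, ℱ n⟧) x)) := by
    refine htprod.congr' ?_
    filter_upwards [eventually_ge_atTop (max m k)] with n hnle
    exact (hxn n hnle).symm
  have := tendsto_nhds_unique hx1 htlim
  simpa [hsup] using this
end
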